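/- For all Boolean functions f on n bits, g on m bits, and p ∈ [0,1], with g(p) = P_{x∼π_p}[g(x)=1], the distributional algorithmic complexity is submultiplicative under composition: a(f∘g, π_p) ≤ a(f, π_{g(p)}) · a(g, π_p). -/

import Mathlib

open Classical

noncomputable section

/-- Flip the bits of `x` in the set `B`. -/
def flipOn {ι : Type*} [DecidableEq ι] (x : ι → Bool) (B : Finset ι) : ι → Bool :=
  fun i => if i ∈ B then !(x i) else x i

/-- Pointwise sensitivity of `f` at `x`. -/
def sensAt {ι : Type*} [Fintype ι] [DecidableEq ι] (f : (ι → Bool) → Bool)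
    (x : ι → Bool) : ℕ :=
  (Finset.univ.filter fun i => f (flipOn x {i}) ≠ f x).card

/-- Pointwise block sensitivity of `f` at `x`. -/
def bsAt {ι : Type*} [DecidableEq ι] (f : (ι → Bool) → Bool) (x : ι → Bool) : ℕ :=
  sSup {m | ∃ B : Fin m → Finset ι,
    (∀ j, f (flipOn x (B j)) ≠ f x) ∧ ∀ j k, j ≠ k → Disjoint (B j) (B k)}

/-- `W` is a witness set for `f` at `x`. -/
def IsWitness {ι : Type*} (f : (ι → Bool) → Bool) (x : ι → Bool) (W : Finset ι) : Prop :=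
  ∀ y, (∀ i ∈ W, y i = x i) → f y = f x

/-- Pointwise minimum witness size of `f` at `x`. -/
def witAt {ι : Type*} (f : (ι → Bool) → Bool) (x : ι → Bool) : ℕ :=
  sInf {k | ∃ W : Finset ι, W.card = k ∧ IsWitness f x W}

/-- Decision trees querying coordinates in `ι`. -/
inductive DTree (ι : Type*) where
  | leaf : DTree ι
  | node : ι → DTree ι → DTree ι → DTree ι

/-- The set of coordinates queried by the tree `T` on input `x`. -/
def DTree.path {ι : Type*} [DecidableEq ι] : DTree ι → (ι → Bool) → Finset ι
  | .leaf, _ => ∅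
  | .node i t0 t1, x => insert i (if x i then t1.path x else t0.path x)

/-- The tree `T` determines `f`: at each leaf the queried bits witness the value of `f`. -/
def DTree.Determines {ι : Type*} [DecidableEq ι] (T : DTree ι)
    (f : (ι → Bool) → Bool) : Prop :=
  ∀ x, IsWitness f x (T.path x)

/-- A partition of the hypercube into subcubes, encoded by the map sending each point to
the code (fixed coordinates) of its part. -/
structure SubcubePartition (ι : Type*) where
  code : (ι → Bool) → (ι → Option Bool)
  self_mem : ∀ x i b, code x i = some b → x i = b
  compat : ∀ x y, (∀ i b, code x i = some b → y i = b) → code y = code x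

/-- Number of coordinates fixed by the subcube containing `x`. -/
def SubcubePartition.codim {ι : Type*} [Fintype ι] (P : SubcubePartition ι)
    (x : ι → Bool) : ℕ :=
  (Finset.univ.filter fun i => (P.code x i).isSome).card

/-- The partition determines `f`, i.e. `f` is constant on each part. -/
def SubcubePartition.Determines {ι : Type*} (P : SubcubePartition ι)
    (f : (ι → Bool) → Bool) : Prop :=
  ∀ x y, (∀ i b, P.code x i = some b → y i = b) → f y = f x

/-- Deterministic sensitivity. -/
def detSens {ι : Type*} [Fintype ι] [DecidableEq ι] (f : (ι → Bool) → Bool) : ℕ :=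
  Finset.univ.sup fun x => sensAt f x

/-- Deterministic block sensitivity. -/
def detBS {ι : Type*} [Fintype ι] [DecidableEq ι] (f : (ι → Bool) → Bool) : ℕ :=
  Finset.univ.sup fun x => bsAt f x

/-- Deterministic witness complexity. -/
def detWit {ι : Type*} [Fintype ι] [DecidableEq ι] (f : (ι → Bool) → Bool) : ℕ :=
  Finset.univ.sup fun x => witAt f x

/-- Deterministic subcube partition complexity. -/
def detSC {ι : Type*} [Fintype ι] (f : (ι → Bool) → Bool) : ℕ :=
  sInf {k | ∃ P : SubcubePartition ι, P.Determines f ∧ ∀ x, P.codim x ≤ k}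

/-- Deterministic algorithmic (decision tree) complexity. -/
def detAlg {ι : Type*} [Fintype ι] [DecidableEq ι] (f : (ι → Bool) → Bool) : ℕ :=
  sInf {k | ∃ T : DTree ι, T.Determines f ∧ ∀ x, (T.path x).card ≤ k}

/-- Weight of the configuration `x` under the product Bernoulli(p) measure `π_p`. -/
def wt {ι : Type*} [Fintype ι] (p : ℝ) (x : ι → Bool) : ℝ :=
  ∏ i, (if x i then p else 1 - p)

/-- Expectation under `π_p`. -/
def expec {ι : Type*} [Fintype ι] [DecidableEq ι] (p : ℝ) (g : (ι → Bool) → ℝ) : ℝ :=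
  ∑ x, wt p x * g x

/-- Distributional sensitivity. -/
def distSens {ι : Type*} [Fintype ι] [DecidableEq ι] (f : (ι → Bool) → Bool) (p : ℝ) : ℝ :=
  expec p fun x => (sensAt f x : ℝ)

/-- Distributional block sensitivity. -/
def distBS {ι : Type*} [Fintype ι] [DecidableEq ι] (f : (ι → Bool) → Bool) (p : ℝ) : ℝ :=
  expec p fun x => (bsAt f x : ℝ)

/-- Distributional witness complexity. -/
def distWit {ι : Type*} [Fintype ι] [DecidableEq ι] (f : (ι → Bool) → Bool) (p : ℝ) : ℝ :=
  expec p fun x => (witAt f x : ℝ)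

/-- Distributional subcube partition complexity. -/
def distSC {ι : Type*} [Fintype ι] [DecidableEq ι] (f : (ι → Bool) → Bool) (p : ℝ) : ℝ :=
  sInf {c | ∃ P : SubcubePartition ι, P.Determines f ∧
    c = expec p fun x => (P.codim x : ℝ)}

/-- Distributional algorithmic complexity. -/
def distAlg {ι : Type*} [Fintype ι] [DecidableEq ι] (f : (ι → Bool) → Bool) (p : ℝ) : ℝ :=
  sInf {c | ∃ T : DTree ι, T.Determines f ∧
    c = expec p fun x => ((T.path x).card : ℝ)}

/-- `μ x J` is the joint probability that the bits equal `x` and the random set equals `J`;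
the conditions say: the marginal of the bits is `π_p`, the random set is a.s. a witness set
for `f`, and the random set is local (conditionally on `{I = J}` and the bits on `J`, the
bits outside `J` are still i.i.d. Bernoulli(p)). -/
def IsLocalWitnessSystem {ι : Type*} [Fintype ι] [DecidableEq ι]
    (f : (ι → Bool) → Bool) (p : ℝ) (μ : (ι → Bool) → Finset ι → ℝ) : Prop :=
  (∀ x J, 0 ≤ μ x J) ∧
  (∀ x, ∑ J, μ x J = wt p x) ∧
  (∀ x J, μ x J ≠ 0 → IsWitness f x J) ∧
  (∀ (J : Finset ι) x y, (∀ i ∈ J, x i = y i) → μ x J * wt p y = μ y J * wt p x)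

/-- Distributional local witness complexity. -/
def distLocal {ι : Type*} [Fintype ι] [DecidableEq ι]
    (f : (ι → Bool) → Bool) (p : ℝ) : ℝ :=
  sInf {c | ∃ μ : (ι → Bool) → Finset ι → ℝ, IsLocalWitnessSystem f p μ ∧
    c = ∑ x, ∑ J, μ x J * (J.card : ℝ)}

/-- The composition `f ∘ g` of Boolean functions, on `n · m` bits. -/
def bcomp {n m : ℕ} (f : (Fin n → Bool) → Bool) (g : (Fin m → Bool) → Bool) :
    (Fin n × Fin m → Bool) → Bool :=
  fun x => f fun i => g fun j => x (i, j)

/-- `P_{x ∼ π_p}[g(x) = 1]`. -/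
def probOne {ι : Type*} [Fintype ι] [DecidableEq ι] (g : (ι → Bool) → Bool) (p : ℝ) : ℝ :=
  ∑ x, wt p x * (if g x then 1 else 0)

/-!
Given trees determining `f` and `g`, simulate the tree for `f` and answer each of its queries
`i` by running the tree for `g` on block `i`. On input `x` this costs `∑ |path_g(xⁱ)|` over the
blocks `i` queried by the `f`-tree on `z = (g(x¹), …, g(xⁿ))`. Whether `i` is queried does not
depend on `zᵢ`, hence not on `xⁱ`, so each summand factorises as `P(i queried) · E|path_g|`; and
`z` is `π_{g(p)}`-distributed, so summing over `i` gives `E_{g(p)}|path_f| · E_p|path_g|`.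
Taking infima over both trees proves the bound.
-/
open Finset Function

section Weights

variable {ι : Type*} [Fintype ι] {p : ℝ}

lemma wt_nonneg (hp0 : 0 ≤ p) (hp1 : p ≤ 1) (x : ι → Bool) : 0 ≤ wt p x :=
  prod_nonneg fun i _ => by cases x i <;> simp <;> linarith

lemma wt_uncurry {κ : Type*} [Fintype κ] (X : ι → κ → Bool) :
    wt p (uncurry X) = ∏ i, wt p (X i) :=
  Fintype.prod_prod_type _

variable [DecidableEq ι]

lemma sum_wt (p : ℝ) : ∑ x : ι → Bool, wt p x = 1 := by
  simpa [wt] using (Fintype.prod_sum (ι := ι) fun _ (b : Bool) => if b then p else 1 - p).symm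

lemma expec_nonneg (hp0 : 0 ≤ p) (hp1 : p ≤ 1) {h : (ι → Bool) → ℝ}
    (hh : ∀ x, 0 ≤ h x) : 0 ≤ expec p h :=
  sum_nonneg fun x _ => mul_nonneg (wt_nonneg hp0 hp1 x) (hh x)

lemma sum_wt_filter_eq (g : (ι → Bool) → Bool) (b : Bool) :
    ∑ y with g y = b, wt p y = if b then probOne g p else 1 - probOne g p := by
  have hq : probOne g p = ∑ y with g y = true, wt p y := by simp [probOne, sum_filter]
  cases b
  · rw [hq, ← sum_wt (ι := ι) p, ← sum_filter_add_sum_filter_not univ fun y => g y = true]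
    simp
  · simp [hq]

lemma probOne_nonneg (g : (ι → Bool) → Bool) (hp0 : 0 ≤ p) (hp1 : p ≤ 1) :
    0 ≤ probOne g p := by
  have h := sum_wt_filter_eq (p := p) g true
  rw [if_pos rfl] at h
  exact h ▸ sum_nonneg fun y _ => wt_nonneg hp0 hp1 y

lemma probOne_le_one (g : (ι → Bool) → Bool) (hp0 : 0 ≤ p) (hp1 : p ≤ 1) :
    probOne g p ≤ 1 := by
  have h := sum_wt_filter_eq (p := p) g false
  have : 0 ≤ ∑ y with g y = false, wt p y := sum_nonneg fun y _ => wt_nonneg hp0 hp1 y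
  simp only [Bool.false_eq_true, if_false] at h
  linarith

end Weights

section ProductSums

variable {ι α : Type*} [Fintype ι] [DecidableEq ι] [Fintype α]

lemma sum_prod_mul_comp {β : Type*} [Fintype β] [DecidableEq β] (w : α → ℝ) (φ : α → β)
    (F : (ι → β) → ℝ) :
    ∑ X : ι → α, (∏ i, w (X i)) * F (φ ∘ X)
      = ∑ z : ι → β, (∏ i, ∑ a with φ a = z i, w a) * F z := by
  have hfib : ∀ z : ι → β, ∏ i, ∑ a with φ a = z i, w a
      = ∑ X : ι → α, if φ ∘ X = z then ∏ i, w (X i) else 0 := by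
    intro z
    simp_rw [sum_filter, Fintype.prod_sum, prod_ite_zero, mem_univ, true_imp_iff, funext_iff,
      comp_apply]
  simp_rw [hfib, sum_mul, ite_mul, zero_mul]
  rw [sum_comm]
  simp

lemma sum_prod_mul_mul_apply_of_update (w : α → ℝ) (hw : ∑ a, w a = 1) (i : ι)
    (F : (ι → α) → ℝ) (hF : ∀ X a, F (update X i a) = F X) (c : α → ℝ) :
    ∑ X, (∏ j, w (X j)) * (F X * c (X i)) = (∑ X, (∏ j, w (X j)) * F X) * ∑ a, w a * c a := by
  obtain ⟨a₀⟩ : Nonempty α := by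
    by_contra h
    simp [not_nonempty_iff.1 h] at hw
  set e := (Equiv.funSplitAt i α).symm
  have he : ∀ a r, e (a, r) = update (e (a₀, r)) i a := fun a r => by
    ext j; by_cases hj : j = i <;> simp [e, hj]
  have hP : ∀ a r, ∏ j, w (e (a, r) j) = w a * ∏ j : {j // j ≠ i}, w (r j) := fun a r => by
    rw [Fintype.prod_eq_mul_prod_subtype_ne _ i]
    simp [e, fun j : {j // j ≠ i} => j.2]
  have hG : ∀ a r, F (e (a, r)) = F (e (a₀, r)) := fun a r => by rw [he, hF]
  have hi : ∀ a r, e (a, r) i = a := fun a r => by simp [e]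
  simp_rw [← e.sum_comp, Fintype.sum_prod_type, hP, hG, hi]
  calc _ = (∑ a, w a * c a) * ∑ r, (∏ j, w (r j)) * F (e (a₀, r)) := by
        rw [sum_mul_sum]
        exact sum_congr rfl fun _ _ => sum_congr rfl fun _ _ => by ring
    _ = _ := by
        rw [mul_comm]
        simp_rw [mul_assoc, ← mul_sum, ← sum_mul, hw, one_mul]

end ProductSums

namespace DTree

variable {ι κ : Type*} [DecidableEq ι]

def ofList : List ι → DTree ι
  | [] => .leaf
  | i :: l => .node i (ofList l) (ofList l)

lemma path_ofList (l : List ι) (x : ι → Bool) : (ofList l).path x = l.toFinset := by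
  induction l with
  | nil => rfl
  | cons i l ih => cases x i <;> simp [ofList, path, ih]

lemma determines_ofList_univ [Fintype ι] (f : (ι → Bool) → Bool) :
    (ofList (univ : Finset ι).toList).Determines f := by
  intro x y hy
  congr
  funext i
  exact hy i (by simp [path_ofList])

lemma mem_path_update (T : DTree ι) (i : ι) (z : ι → Bool) (b : Bool) :
    i ∈ T.path (update z i b) ↔ i ∈ T.path z := by
  induction T with
  | leaf => rfl
  | node j t0 t1 ih0 ih1 =>
    by_cases hj : j = i
    · simp [path, hj]
    · simp only [path, mem_insert, update_of_ne hj]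
      cases z j <;> simp [ih0, ih1]

variable [DecidableEq κ]

def graft (i : ι) : DTree κ → (κ → Bool) → ((κ → Bool) → DTree (ι × κ)) → DTree (ι × κ)
  | .leaf, y, k => k y
  | .node j t0 t1, y, k =>
      .node (i, j) (graft i t0 (update y j false) k) (graft i t1 (update y j true) k)

lemma path_graft (i : ι) (T : DTree κ) (y : κ → Bool) (k : (κ → Bool) → DTree (ι × κ))
    (x : ι × κ → Bool) :
    (graft i T y k).path x = (T.path (fun j => x (i, j))).image (i, ·) ∪
      (k fun j => if j ∈ T.path (fun j => x (i, j)) then x (i, j) else y j).path x := by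
  induction T generalizing y with
  | leaf => simp [graft, path]
  | node j t0 t1 ih0 ih1 =>
    cases hb : x (i, j) <;>
      simp only [graft, path, hb, ih0, ih1, image_insert, insert_union, mem_insert,
        Bool.false_eq_true, ↓reduceIte] <;>
      congr 4 <;> funext j' <;> by_cases hj : j' = j <;> simp [hj, hb]

/-- Runs `Tf`, answering each query `i` by running `Tg` on block `i`. The bits of block `i` that
`Tg` leaves unqueried are filled in with `false`, which is harmless when `Tg` determines `g`. -/
def comp : DTree ι → DTree κ → ((κ → Bool) → Bool) → DTree (ι × κ)
  | .leaf, _, _ => .leaf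
  | .node i t0 t1, Tg, g =>
      graft i Tg (fun _ => false) fun y => if g y then t1.comp Tg g else t0.comp Tg g

variable {Tg : DTree κ} {g : (κ → Bool) → Bool}

lemma path_comp (hTg : Tg.Determines g) (Tf : DTree ι) (x : ι × κ → Bool) :
    (Tf.comp Tg g).path x = (Tf.path fun i => g fun j => x (i, j)).biUnion
      fun i => (Tg.path fun j => x (i, j)).image (i, ·) := by
  induction Tf with
  | leaf => rfl
  | node i t0 t1 ih0 ih1 =>
    have hg : g (fun j => if j ∈ Tg.path (fun j => x (i, j)) then x (i, j) else false)
        = g fun j => x (i, j) :=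
      hTg _ _ fun j hj => by simp [hj]
    rw [comp, path_graft, hg]
    cases hb : g fun j => x (i, j) <;> simp [path, hb, ih0, ih1]

lemma determines_comp (hTg : Tg.Determines g) {Tf : DTree ι} {f : (ι → Bool) → Bool}
    (hTf : Tf.Determines f) :
    (Tf.comp Tg g).Determines fun x => f fun i => g fun j => x (i, j) := by
  intro x y hy
  refine hTf _ _ fun i hi => hTg _ _ fun j hj => hy (i, j) ?_
  rw [path_comp hTg]
  exact mem_biUnion.2 ⟨i, hi, mem_image_of_mem _ hj⟩

lemma card_path_comp (hTg : Tg.Determines g) (Tf : DTree ι) (x : ι × κ → Bool) :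
    ((Tf.comp Tg g).path x).card
      = ∑ i ∈ Tf.path (fun i => g fun j => x (i, j)), (Tg.path fun j => x (i, j)).card := by
  rw [path_comp hTg, card_biUnion]
  · exact sum_congr rfl fun i _ => card_image_of_injective _ (Prod.mk_right_injective i)
  · intro i _ i' _ hii'
    simp_rw [disjoint_left, mem_image]
    rintro _ ⟨j, _, rfl⟩ ⟨j', _, h⟩
    exact hii' (congrArg Prod.fst h).symm

end DTree

section Expectation

variable {ι κ : Type*} [Fintype ι] [DecidableEq ι] [Fintype κ] [DecidableEq κ] {p : ℝ}

lemma sum_prod_wt_mul_comp (g : (κ → Bool) → Bool) (F : (ι → Bool) → ℝ) :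
    ∑ X : ι → κ → Bool, (∏ i, wt p (X i)) * F (fun i => g (X i)) = expec (probOne g p) F := by
  refine (sum_prod_mul_comp (wt p) g F).trans (sum_congr rfl fun z _ => ?_)
  simp_rw [sum_wt_filter_eq]
  rfl

lemma sum_prod_wt_mul_sum_path (g : (κ → Bool) → Bool) (Tf : DTree ι) (c : (κ → Bool) → ℝ) :
    ∑ X : ι → κ → Bool, (∏ i, wt p (X i)) * ∑ i ∈ Tf.path (fun i => g (X i)), c (X i)
      = expec (probOne g p) (fun z => ((Tf.path z).card : ℝ)) * expec p c := by
  have hF : ∀ i (X : ι → κ → Bool) y,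
      (if i ∈ Tf.path (fun i' => g (update X i y i')) then (1 : ℝ) else 0)
        = if i ∈ Tf.path (fun i' => g (X i')) then 1 else 0 := by
    intro i X y
    simp only [funext (apply_update (fun _ => g) X i y), DTree.mem_path_update]
  calc _ = ∑ i, ∑ X : ι → κ → Bool, (∏ j, wt p (X j)) *
          ((if i ∈ Tf.path (fun i' => g (X i')) then 1 else 0) * c (X i)) := by
        rw [sum_comm]
        simp_rw [ite_mul, one_mul, zero_mul, mul_ite, mul_zero, sum_ite_mem univ, univ_inter,
          mul_sum]
    _ = ∑ i, expec (probOne g p) (fun z => if i ∈ Tf.path z then 1 else 0) * expec p c := by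
        refine sum_congr rfl fun i _ => ?_
        rw [sum_prod_mul_mul_apply_of_update (wt p) (sum_wt p) i _ (hF i),
          sum_prod_wt_mul_comp g fun z => if i ∈ Tf.path z then 1 else 0]
        rfl
    _ = _ := by
        rw [← sum_mul]
        congr 1
        unfold expec
        rw [sum_comm]
        simp_rw [← mul_sum, sum_boole, filter_mem_eq_inter, univ_inter]

lemma DTree.expec_card_path_comp {Tg : DTree κ} {g : (κ → Bool) → Bool}
    (hTg : Tg.Determines g) (Tf : DTree ι) :
    expec p (fun x => ((Tf.comp Tg g).path x).card : (ι × κ → Bool) → ℝ)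
      = expec (probOne g p) (fun z => ((Tf.path z).card : ℝ))
        * expec p (fun y => ((Tg.path y).card : ℝ)) := by
  rw [← sum_prod_wt_mul_sum_path, expec, ← (Equiv.curry ι κ Bool).symm.sum_comp]
  refine sum_congr rfl fun X _ => ?_
  simp [DTree.card_path_comp hTg, wt_uncurry]

end Expectation

lemma le_csInf_mul_csInf {s t : Set ℝ} {x : ℝ} (hs : s.Nonempty) (ht : t.Nonempty)
    (hs0 : ∀ a ∈ s, 0 ≤ a) (ht0 : ∀ b ∈ t, 0 ≤ b) (h : ∀ a ∈ s, ∀ b ∈ t, x ≤ a * b) :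
    x ≤ sInf s * sInf t := by
  have key : ∀ a ∈ s, x ≤ sInf t * a := fun a ha => by
    rw [mul_comm, ← smul_eq_mul, ← Real.sInf_smul_of_nonneg (hs0 a ha)]
    exact le_csInf ht.smul_set (by rintro _ ⟨b, hb, rfl⟩; exact h a ha b hb)
  rw [mul_comm, ← smul_eq_mul, ← Real.sInf_smul_of_nonneg (Real.sInf_nonneg ht0)]
  exact le_csInf hs.smul_set (by rintro _ ⟨a, ha, rfl⟩; exact key a ha)

section DistAlg

variable {ι : Type*} [Fintype ι] [DecidableEq ι] {p : ℝ}

lemma expec_card_path_nonneg (hp0 : 0 ≤ p) (hp1 : p ≤ 1) (T : DTree ι) :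
    0 ≤ expec p fun x => ((T.path x).card : ℝ) :=
  expec_nonneg hp0 hp1 fun _ => Nat.cast_nonneg _

lemma distAlg_le (hp0 : 0 ≤ p) (hp1 : p ≤ 1) {f : (ι → Bool) → Bool} {T : DTree ι}
    (hT : T.Determines f) : distAlg f p ≤ expec p fun x => ((T.path x).card : ℝ) :=
  csInf_le ⟨0, by rintro _ ⟨T, -, rfl⟩; exact expec_card_path_nonneg hp0 hp1 T⟩ ⟨T, hT, rfl⟩

lemma le_distAlg_mul_distAlg {κ : Type*} [Fintype κ] [DecidableEq κ] {q x : ℝ}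
    (hq0 : 0 ≤ q) (hq1 : q ≤ 1) (hp0 : 0 ≤ p) (hp1 : p ≤ 1)
    {f : (ι → Bool) → Bool} {g : (κ → Bool) → Bool}
    (h : ∀ (Tf : DTree ι) (Tg : DTree κ), Tf.Determines f → Tg.Determines g →
      x ≤ (expec q fun z => ((Tf.path z).card : ℝ)) * expec p fun y => ((Tg.path y).card : ℝ)) :
    x ≤ distAlg f q * distAlg g p := by
  unfold distAlg
  refine le_csInf_mul_csInf ⟨_, _, DTree.determines_ofList_univ f, rfl⟩
    ⟨_, _, DTree.determines_ofList_univ g, rfl⟩ ?_ ?_ ?_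
  · rintro _ ⟨T, -, rfl⟩
    exact expec_card_path_nonneg hq0 hq1 T
  · rintro _ ⟨T, -, rfl⟩
    exact expec_card_path_nonneg hp0 hp1 T
  · rintro _ ⟨Tf, hTf, rfl⟩ _ ⟨Tg, hTg, rfl⟩
    exact h Tf Tg hTf hTg

end DistAlg

/-- distributional algorithmic complexity is submultiplicative under
composition: `a(f∘g, π_p) ≤ a(f, π_{g(p)}) · a(g, π_p)`. -/
theorem distAlg_comp (n m : ℕ) (f : (Fin n → Bool) → Bool) (g : (Fin m → Bool) → Bool)
    (p : ℝ) (hp0 : 0 ≤ p) (hp1 : p ≤ 1) :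
    distAlg (bcomp f g) p ≤ distAlg f (probOne g p) * distAlg g p := by
  refine le_distAlg_mul_distAlg (probOne_nonneg g hp0 hp1) (probOne_le_one g hp0 hp1) hp0 hp1
    fun Tf Tg hTf hTg => ?_
  rw [← DTree.expec_card_path_comp hTg]
  exact distAlg_le hp0 hp1 (DTree.determines_comp hTg hTf)
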